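/- Suppose the tensor M_k factors along the line graph, i.e., there exist functions K_i : S × S → (0,∞), 0 ≤ i ≤ T−1, with M_k(x_0,…,x_T) = Π_{i=0}^{T−1} K_i(x_i, x_{i+1}) for all (x_0,…,x_T) ∈ S^{T+1}. Then for any η > 0 the linearized cost tensor C(M_k) + E(M_k) − (1/η) log M_k also decomposes along the line graph: there exist functions D_i : S × S → ℝ, 0 ≤ i ≤ T−1, such that C(M_k)(x) + E(M_k)(x) − (1/η) log M_k(x) = Σ_{i=0}^{T−1} D_i(x_i, x_{i+1}) for all x = (x_0,…,x_T) ∈ S^{T+1}. -/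

import Mathlib

/-!
For every tensor `M`, the terms of `C(M)` and `E(M)` already depend only on the pairs
`(x_i, x_{i+1})` (the summand `E_i(x_i)` trivially so); the factorization of
`M_k` is needed only for `log M_k`, which becomes `Σ_i log K_i(x_i, x_{i+1})`. Decomposition
along the line graph is preserved by sums, differences and scalar multiples.
-/

open scoped BigOperators Classical

noncomputable section

namespace Stmt10

variable {d T : ℕ} {S : Finset (EuclideanSpace ℝ (Fin d))}

/-- The `i`-th marginal `P_i(M)(y) = Σ_{x : x_i = y} M(x)` of a tensor on `S^{T+1}`. -/
def marg (M : (Fin (T + 1) → {x // x ∈ S}) → ℝ) (i : Fin (T + 1)) (y : {x // x ∈ S}) : ℝ :=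
  ∑ x : Fin (T + 1) → {x // x ∈ S}, if x i = y then M x else 0

/-- The pairwise marginal `P_{i,i+1}(M)(y,z) = Σ_{x : x_i = y, x_{i+1} = z} M(x)`. -/
def margPair (M : (Fin (T + 1) → {x // x ∈ S}) → ℝ) (i : Fin T) (y z : {x // x ∈ S}) : ℝ :=
  ∑ x : Fin (T + 1) → {x // x ∈ S}, if x i.castSucc = y ∧ x i.succ = z then M x else 0

/-- The discrete convolution `[∇W * P_i(M)](y) = Σ_{z ∈ S} ∇W(y - z) P_i(M)(z)`. -/
def convW (W : EuclideanSpace ℝ (Fin d) → ℝ) (M : (Fin (T + 1) → {x // x ∈ S}) → ℝ)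
    (i : Fin (T + 1)) (y : EuclideanSpace ℝ (Fin d)) : EuclideanSpace ℝ (Fin d) :=
  ∑ z : {x // x ∈ S}, marg M i z • gradient W (y - (z : EuclideanSpace ℝ (Fin d)))

/-- The cost tensor
`C(M)(x_0,…,x_T) = Σ_{i=0}^{T-1} (T/2) ‖x_{i+1} - x_i + (1/T)[∇W * P_i(M)](x_i)‖²`. -/
def costC (W : EuclideanSpace ℝ (Fin d) → ℝ) (M : (Fin (T + 1) → {x // x ∈ S}) → ℝ)
    (x : Fin (T + 1) → {x // x ∈ S}) : ℝ :=
  ∑ i : Fin T, ((T : ℝ) / 2) *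
    ‖(x i.succ : EuclideanSpace ℝ (Fin d)) - (x i.castSucc : EuclideanSpace ℝ (Fin d))
      + (1 / (T : ℝ)) • convW W M i.castSucc (x i.castSucc : EuclideanSpace ℝ (Fin d))‖ ^ 2

/-- `E_i(y) = Σ_{(z,w) ∈ S×S} ∇W(z-y)ᵀ (w - z + (1/T)[∇W * P_i(M)](z)) P_{i,i+1}(M)(z,w)`. -/
def Ei (W : EuclideanSpace ℝ (Fin d) → ℝ) (M : (Fin (T + 1) → {x // x ∈ S}) → ℝ)
    (i : Fin T) (y : EuclideanSpace ℝ (Fin d)) : ℝ :=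
  ∑ z : {x // x ∈ S}, ∑ w : {x // x ∈ S},
    (inner ℝ (gradient W ((z : EuclideanSpace ℝ (Fin d)) - y))
      ((w : EuclideanSpace ℝ (Fin d)) - (z : EuclideanSpace ℝ (Fin d))
        + (1 / (T : ℝ)) • convW W M i.castSucc (z : EuclideanSpace ℝ (Fin d))) : ℝ)
    * margPair M i z w

/-- `E(M)(x_0,…,x_T) = Σ_{i=0}^{T-1} E_i(x_i)`. -/
def Etens (W : EuclideanSpace ℝ (Fin d) → ℝ) (M : (Fin (T + 1) → {x // x ∈ S}) → ℝ)
    (x : Fin (T + 1) → {x // x ∈ S}) : ℝ :=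
  ∑ i : Fin T, Ei W M i (x i.castSucc : EuclideanSpace ℝ (Fin d))

def IsLineGraphSum {α : Type*} (f : (Fin (T + 1) → α) → ℝ) : Prop :=
  ∃ D : Fin T → α → α → ℝ, ∀ x, f x = ∑ i : Fin T, D i (x i.castSucc) (x i.succ)

namespace IsLineGraphSum

variable {α : Type*} {f g : (Fin (T + 1) → α) → ℝ}

theorem add (hf : IsLineGraphSum f) (hg : IsLineGraphSum g) : IsLineGraphSum (f + g) := by
  obtain ⟨D, hD⟩ := hf
  obtain ⟨E, hE⟩ := hg
  exact ⟨D + E, fun x => by simp [hD, hE, Finset.sum_add_distrib]⟩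

theorem sub (hf : IsLineGraphSum f) (hg : IsLineGraphSum g) : IsLineGraphSum (f - g) := by
  obtain ⟨D, hD⟩ := hf
  obtain ⟨E, hE⟩ := hg
  exact ⟨D - E, fun x => by simp [hD, hE, Finset.sum_sub_distrib]⟩

theorem const_mul (c : ℝ) (hf : IsLineGraphSum f) : IsLineGraphSum (fun x => c * f x) := by
  obtain ⟨D, hD⟩ := hf
  exact ⟨fun i y z => c * D i y z, fun x => by simp [hD, Finset.mul_sum]⟩

theorem log_of_eq_prod {M : (Fin (T + 1) → α) → ℝ} (K : Fin T → α → α → ℝ)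
    (hK : ∀ i y z, 0 < K i y z) (hM : ∀ x, M x = ∏ i : Fin T, K i (x i.castSucc) (x i.succ)) :
    IsLineGraphSum (fun x => Real.log (M x)) :=
  ⟨fun i y z => Real.log (K i y z), fun x => by
    simp only [hM, Real.log_prod fun i _ => (hK i _ _).ne']⟩

end IsLineGraphSum

theorem isLineGraphSum_costC (W : EuclideanSpace ℝ (Fin d) → ℝ)
    (M : (Fin (T + 1) → {x // x ∈ S}) → ℝ) : IsLineGraphSum (costC W M) :=
  ⟨fun i y z => ((T : ℝ) / 2) *
    ‖(z : EuclideanSpace ℝ (Fin d)) - y + (1 / (T : ℝ)) • convW W M i.castSucc y‖ ^ 2,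
    fun _ => rfl⟩

theorem isLineGraphSum_Etens (W : EuclideanSpace ℝ (Fin d) → ℝ)
    (M : (Fin (T + 1) → {x // x ∈ S}) → ℝ) : IsLineGraphSum (Etens W M) :=
  ⟨fun i y _ => Ei W M i y, fun _ => rfl⟩

theorem statement_10_general
    (W : EuclideanSpace ℝ (Fin d) → ℝ)
    (η : ℝ)
    (Mk : (Fin (T + 1) → {x // x ∈ S}) → ℝ)
    (K : Fin T → {x // x ∈ S} → {x // x ∈ S} → ℝ)
    (hKpos : ∀ i y z, 0 < K i y z)
    (hfact : ∀ x : Fin (T + 1) → {x // x ∈ S},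
      Mk x = ∏ i : Fin T, K i (x i.castSucc) (x i.succ)) :
    ∃ D : Fin T → {x // x ∈ S} → {x // x ∈ S} → ℝ,
      ∀ x : Fin (T + 1) → {x // x ∈ S},
        costC W Mk x + Etens W Mk x - (1 / η) * Real.log (Mk x)
          = ∑ i : Fin T, D i (x i.castSucc) (x i.succ) :=
  ((isLineGraphSum_costC W Mk).add (isLineGraphSum_Etens W Mk)).sub
    ((IsLineGraphSum.log_of_eq_prod K hKpos hfact).const_mul (1 / η))

/-- If the tensor `M_k` factors along the line graph,
`M_k(x) = Π_i K_i(x_i, x_{i+1})` with `K_i > 0`, then for any `η > 0` the linearized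
cost tensor `C(M_k) + E(M_k) - (1/η) log M_k` also decomposes along the line graph. -/
theorem statement_10 (hT : 1 ≤ T) (hS : S.Nonempty)
    (W : EuclideanSpace ℝ (Fin d) → ℝ) (hW : ContDiff ℝ 1 W)
    (η : ℝ) (hη : 0 < η)
    (Mk : (Fin (T + 1) → {x // x ∈ S}) → ℝ)
    (K : Fin T → {x // x ∈ S} → {x // x ∈ S} → ℝ)
    (hKpos : ∀ i y z, 0 < K i y z)
    (hfact : ∀ x : Fin (T + 1) → {x // x ∈ S},
      Mk x = ∏ i : Fin T, K i (x i.castSucc) (x i.succ)) :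
    ∃ D : Fin T → {x // x ∈ S} → {x // x ∈ S} → ℝ,
      ∀ x : Fin (T + 1) → {x // x ∈ S},
        costC W Mk x + Etens W Mk x - (1 / η) * Real.log (Mk x)
          = ∑ i : Fin T, D i (x i.castSucc) (x i.succ) :=
  statement_10_general W η Mk K hKpos hfact

end Stmt10
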